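/- arXiv:1504.07045 — 2 statements merged into one kernel-verified Lean document; each statement's English description precedes it below -/
import Mathlib

section
/- If a probability vector y is a convex combination of permutations of a probability vector x, and y is a pure state (i.e., a standard basis vector / deterministic distribution), then x is itself a standard basis vector, and y is a permutation of x. -/
/-!
Write `y = e_j`. Evaluating the mixture at `j` gives `1 = ∑ᵢ qᵢ x(πᵢ j)`, a convex
combination of numbers at most `1`, so some `x(πᵢ j)` equals `1`. A probability vector with
an entry equal to `1` is the basis vector at that entry, and then `y = x ∘ πᵢ`.
-/

def IsProbVec {n : ℕ} (x : Fin n → ℝ) : Prop :=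
  (∀ i, 0 ≤ x i) ∧ ∑ i, x i = 1

/-- `y` is a convex combination of permutations of `x`. -/
def MixPerm {n : ℕ} (x y : Fin n → ℝ) : Prop :=
  ∃ (k : ℕ) (q : Fin k → ℝ) (π : Fin k → Equiv.Perm (Fin n)),
    (∀ i, 0 ≤ q i) ∧ (∑ i, q i = 1) ∧ (∀ j, y j = ∑ i, q i * x (π i j))

/-- `y` is a pure classical state (standard basis vector). -/
def IsBasisVec {n : ℕ} (y : Fin n → ℝ) : Prop :=
  ∃ j : Fin n, y = fun i => if i = j then (1 : ℝ) else 0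

open Finset

theorem exists_eq_one_of_sum_mul_eq_one {ι : Type*} [Fintype ι] {q a : ι → ℝ}
    (hq0 : ∀ i, 0 ≤ q i) (hq1 : ∑ i, q i = 1) (ha : ∀ i, a i ≤ 1)
    (h : ∑ i, q i * a i = 1) : ∃ i, a i = 1 := by
  have hgap : ∑ i, q i * (1 - a i) = 0 := by
    simp only [mul_sub, mul_one, sum_sub_distrib, hq1, h, sub_self]
  have hterm := (sum_eq_zero_iff_of_nonneg fun i _ =>
    mul_nonneg (hq0 i) (sub_nonneg.2 (ha i))).1 hgap
  obtain ⟨i, -, hqi⟩ := exists_ne_zero_of_sum_ne_zero (hq1 ▸ one_ne_zero : ∑ i, q i ≠ 0)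
  exact ⟨i, (sub_eq_zero.1 ((mul_eq_zero.1 (hterm i (mem_univ i))).resolve_left hqi)).symm⟩

namespace IsProbVec

variable {n : ℕ} {x : Fin n → ℝ}

theorem le_one (hx : IsProbVec x) (i : Fin n) : x i ≤ 1 :=
  hx.2 ▸ single_le_sum (fun i _ => hx.1 i) (mem_univ i)

theorem eq_basisVec_of_apply_eq_one (hx : IsProbVec x) {m : Fin n} (hm : x m = 1) :
    x = fun i => if i = m then (1 : ℝ) else 0 := by
  have hrest : ∑ i ∈ univ.erase m, x i = 0 := by
    linarith [add_sum_erase univ x (mem_univ m), hx.2]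
  funext i
  split_ifs with him
  · exact him ▸ hm
  · exact (sum_eq_zero_iff_of_nonneg fun i _ => hx.1 i).1 hrest i
      (mem_erase.2 ⟨him, mem_univ i⟩)

end IsProbVec

/-- If a mixture of permutations of `x` is pure, then `x` is pure, and the
target is a permutation of `x`. -/
theorem pure_reached_only_from_pure {n : ℕ} (x y : Fin n → ℝ)
    (hx : IsProbVec x) (hmix : MixPerm x y) (hy : IsBasisVec y) :
    IsBasisVec x ∧ ∃ π : Equiv.Perm (Fin n), y = fun j => x (π j) := by
  obtain ⟨j, rfl⟩ := hy
  obtain ⟨k, q, π, hq0, hq1, hyx⟩ := hmix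
  obtain ⟨i, hi⟩ := exists_eq_one_of_sum_mul_eq_one hq0 hq1 (fun i => hx.le_one (π i j))
    (by simpa using (hyx j).symm)
  have hx_basis := hx.eq_basisVec_of_apply_eq_one hi
  refine ⟨⟨_, hx_basis⟩, π i, ?_⟩
  funext j'
  simp only [hx_basis, (π i).injective.eq_iff]
end

section
/- No catalytic erasure for probability vectors: if x ∈ R^n and γ ∈ R^m are probability vectors, e a standard basis vector of R^n, and e ⊗ γ is a convex combination of permutations of x ⊗ γ, then x is itself a standard basis vector. -/
def IsProbVecOn {ι : Type} [Fintype ι] (x : ι → ℝ) : Prop :=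
  (∀ i, 0 ≤ x i) ∧ ∑ i, x i = 1

/-- `y` is a convex combination of permutations of `x`. -/
def MixPermOn {ι : Type} [Fintype ι] (x y : ι → ℝ) : Prop :=
  ∃ (k : ℕ) (q : Fin k → ℝ) (π : Fin k → Equiv.Perm ι),
    (∀ i, 0 ≤ q i) ∧ (∑ i, q i = 1) ∧ (∀ j, y j = ∑ i, q i * x (π i j))

/-- Kronecker (tensor) product of two vectors. -/
def kronVec {n m : ℕ} (x : Fin n → ℝ) (z : Fin m → ℝ) : Fin n × Fin m → ℝ :=
  fun p => x p.1 * z p.2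

lemma jensen_sq' {k : ℕ} (q a : Fin k → ℝ) (hq0 : ∀ i, 0 ≤ q i) (hq1 : ∑ i, q i = 1) :
    (∑ i, q i * a i) ^ 2 ≤ ∑ i, q i * (a i) ^ 2 := by
  have h := Finset.sum_mul_sq_le_sq_mul_sq Finset.univ
      (fun i => Real.sqrt (q i)) (fun i => Real.sqrt (q i) * a i)
  have e1 : ∀ i : Fin k, Real.sqrt (q i) * (Real.sqrt (q i) * a i) = q i * a i := by
    intro i; rw [← mul_assoc, Real.mul_self_sqrt (hq0 i)]
  have e2 : ∀ i : Fin k, Real.sqrt (q i) ^ 2 = q i := fun i => Real.sq_sqrt (hq0 i)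
  have e3 : ∀ i : Fin k, (Real.sqrt (q i) * a i) ^ 2 = q i * (a i) ^ 2 := by
    intro i; rw [mul_pow, e2]
  simp only [e1, e2, e3] at h
  calc (∑ i, q i * a i) ^ 2 ≤ (∑ i, q i) * ∑ i, q i * (a i) ^ 2 := h
    _ = ∑ i, q i * (a i) ^ 2 := by rw [hq1, one_mul]

/-- No catalytic erasure: if `e ⊗ γ` is a mixture of permutations of `x ⊗ γ`
with `e` a standard basis vector, then `x` is a standard basis vector. -/
theorem no_catalytic_erasure {n m : ℕ} (x : Fin n → ℝ) (γ : Fin m → ℝ)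
    (hx : IsProbVecOn x) (hγ : IsProbVecOn γ) (j₀ : Fin n)
    (herase : MixPermOn (kronVec x γ)
      (kronVec (fun i => if i = j₀ then (1 : ℝ) else 0) γ)) :
    ∃ j : Fin n, x = fun i => if i = j then (1 : ℝ) else 0 := by
  obtain ⟨hx0, hx1⟩ := hx
  obtain ⟨hγ0, hγ1⟩ := hγ
  obtain ⟨k, q, π, hq0, hq1, hy⟩ := herase
  -- ∑ γ² > 0
  have hγsq_pos : 0 < ∑ b, (γ b) ^ 2 := by
    rcases (Finset.sum_nonneg (fun b (_ : b ∈ Finset.univ) => sq_nonneg (γ b))).lt_or_eq with h | h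
    · exact h
    · exfalso
      have hz : ∀ b ∈ Finset.univ, (γ b) ^ 2 = 0 :=
        (Finset.sum_eq_zero_iff_of_nonneg (fun b _ => sq_nonneg (γ b))).mp h.symm
      have : ∑ b, γ b = 0 := Finset.sum_eq_zero fun b _ => by
        have := hz b (Finset.mem_univ b); nlinarith
      linarith
  -- the squared-norm of x⊗γ
  have hS : ∑ p : Fin n × Fin m, (kronVec x γ p) ^ 2
      = (∑ j, (x j) ^ 2) * (∑ b, (γ b) ^ 2) := by
    rw [Fintype.sum_prod_type, Finset.sum_mul]
    refine Finset.sum_congr rfl fun j _ => ?_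
    rw [Finset.mul_sum]
    exact Finset.sum_congr rfl fun b _ => by simp [kronVec]; ring
  -- permutation invariance
  have hperm : ∀ i : Fin k, ∑ p : Fin n × Fin m, (kronVec x γ (π i p)) ^ 2
      = (∑ j, (x j) ^ 2) * (∑ b, (γ b) ^ 2) := by
    intro i
    rw [← hS]
    exact Equiv.sum_comp (π i) (fun p => (kronVec x γ p) ^ 2)
  -- LHS: ∑ (e⊗γ)² = ∑ γ²
  have hL : ∑ p : Fin n × Fin m,
      (kronVec (fun i => if i = j₀ then (1 : ℝ) else 0) γ p) ^ 2 = ∑ b, (γ b) ^ 2 := by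
    rw [Fintype.sum_prod_type]
    have : ∀ j : Fin n, ∑ b, (kronVec (fun i => if i = j₀ then (1 : ℝ) else 0) γ (j, b)) ^ 2
        = if j = j₀ then ∑ b, (γ b) ^ 2 else 0 := by
      intro j
      by_cases hj : j = j₀ <;> simp [kronVec, hj]
    simp only [this]
    simp
  -- Jensen: pointwise bound then sum
  have key : ∑ b, (γ b) ^ 2 ≤ (∑ j, (x j) ^ 2) * (∑ b, (γ b) ^ 2) := by
    calc ∑ b, (γ b) ^ 2
        = ∑ p : Fin n × Fin m,
            (kronVec (fun i => if i = j₀ then (1 : ℝ) else 0) γ p) ^ 2 := hL.symm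
      _ ≤ ∑ p : Fin n × Fin m, ∑ i, q i * (kronVec x γ (π i p)) ^ 2 := by
          refine Finset.sum_le_sum fun p _ => ?_
          rw [hy p]
          exact jensen_sq' q (fun i => kronVec x γ (π i p)) hq0 hq1
      _ = ∑ i, q i * ∑ p : Fin n × Fin m, (kronVec x γ (π i p)) ^ 2 := by
          rw [Finset.sum_comm]
          exact Finset.sum_congr rfl fun i _ => (Finset.mul_sum _ _ _).symm
      _ = ∑ i, q i * ((∑ j, (x j) ^ 2) * (∑ b, (γ b) ^ 2)) := by
          exact Finset.sum_congr rfl fun i _ => by rw [hperm i]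
      _ = (∑ j, (x j) ^ 2) * (∑ b, (γ b) ^ 2) := by
          rw [← Finset.sum_mul, hq1, one_mul]
  have hxsq_ge : (1 : ℝ) ≤ ∑ j, (x j) ^ 2 := by
    by_contra h
    push_neg at h
    nlinarith
  -- but ∑ x² ≤ ∑ x = 1 since 0 ≤ x_i ≤ 1
  have hxle1 : ∀ j, x j ≤ 1 := by
    intro j
    have : ∑ i ∈ Finset.univ.erase j, x i ≥ 0 :=
      Finset.sum_nonneg fun i _ => hx0 i
    have hsplit : x j + ∑ i ∈ Finset.univ.erase j, x i = 1 := by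
      rw [Finset.add_sum_erase _ _ (Finset.mem_univ j)]; exact hx1
    linarith
  have hxsq_le : ∑ j, (x j) ^ 2 ≤ 1 := by
    calc ∑ j, (x j) ^ 2 ≤ ∑ j, x j :=
        Finset.sum_le_sum fun j _ => by nlinarith [hx0 j, hxle1 j]
      _ = 1 := hx1
  have heq : ∑ j, (x j) ^ 2 = 1 := le_antisymm hxsq_le hxsq_ge
  -- each x_j ∈ {0,1}
  have hterm : ∀ j ∈ Finset.univ, x j - (x j) ^ 2 = 0 := by
    refine (Finset.sum_eq_zero_iff_of_nonneg fun j _ => by nlinarith [hx0 j, hxle1 j]).mp ?_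
    rw [Finset.sum_sub_distrib, hx1, heq, sub_self]
  have h01 : ∀ j : Fin n, x j = 0 ∨ x j = 1 := by
    intro j
    have := hterm j (Finset.mem_univ j)
    have : x j * (1 - x j) = 0 := by ring_nf; nlinarith
    rcases mul_eq_zero.mp this with h | h
    · exact Or.inl h
    · exact Or.inr (by linarith)
  -- find the j with x j = 1
  have hex : ∃ j : Fin n, x j = 1 := by
    by_contra h
    push_neg at h
    have : ∀ j, x j = 0 := fun j => (h01 j).resolve_right (h j)
    have : ∑ j, x j = 0 := Finset.sum_eq_zero fun j _ => this j
    linarith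
  obtain ⟨j, hj⟩ := hex
  refine ⟨j, funext fun i => ?_⟩
  by_cases hi : i = j
  · simp [hi, hj]
  · simp only [hi, if_false]
    by_contra hne
    have hxi1 : x i = 1 := (h01 i).resolve_left hne
    have : (2 : ℝ) ≤ ∑ l, x l := by
      have hsub : ({i, j} : Finset (Fin n)) ⊆ Finset.univ := Finset.subset_univ _
      have : ∑ l ∈ ({i, j} : Finset (Fin n)), x l = 2 := by
        rw [Finset.sum_pair hi, hxi1, hj]; norm_num
      calc (2 : ℝ) = ∑ l ∈ ({i, j} : Finset (Fin n)), x l := this.symm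
        _ ≤ ∑ l, x l := Finset.sum_le_sum_of_subset_of_nonneg hsub fun l _ _ => hx0 l
    linarith
end
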